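/- Let L be the covector set of an oriented matroid without loops on a finite set E, let R ∈ T, e ∈ E, let P be a tope with P_e = −R_e, and let F ∈ W_{R,e}(P). Then the tope C₀ := F∘R lies in (0̂,P)^△_{R,e} with [C₀,P]_R = star(F), and C₀ is the greatest element, with respect to ⪯_R, of the set of all C ∈ (0̂,P)^△_{R,e} for which there exists X ∈ L with X ≤ F and [C,P]_R = star(X). -/

import Mathlib

open Finset

/-- Sign vectors on ground set `E`. -/
abbrev SignVec (E : Type*) := E → SignType

namespace SignVec

/-- The componentwise partial order on sign vectors generated by `0 < +` and `0 < -`. -/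
def le {E : Type*} (X Y : SignVec E) : Prop := ∀ e, X e = 0 ∨ X e = Y e

/-- Composition of sign vectors. -/
def comp {E : Type*} (X Y : SignVec E) : SignVec E := fun e => if X e = 0 then Y e else X e

end SignVec

/-- The covector axioms for an oriented matroid given by its set of covectors. -/
structure IsOrientedMatroid {E : Type*} (L : Set (SignVec E)) : Prop where
  zero_mem : (0 : SignVec E) ∈ L
  neg_mem : ∀ X ∈ L, (-X) ∈ L
  comp_mem : ∀ X ∈ L, ∀ Y ∈ L, SignVec.comp X Y ∈ L
  elim : ∀ X ∈ L, ∀ Y ∈ L, ∀ e, X e = -Y e → X e ≠ 0 →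
    ∃ Z ∈ L, Z e = 0 ∧ ∀ f, ¬(X f = -Y f ∧ X f ≠ 0) → Z f = SignVec.comp X Y f

/-- The set of topes (maximal covectors) of `L`. -/
def Topes {E : Type*} (L : Set (SignVec E)) : Set (SignVec E) :=
  {T | T ∈ L ∧ ∀ X ∈ L, SignVec.le T X → X = T}

/-- `L` has no loops: every tope is nowhere zero. -/
def Loopless {E : Type*} (L : Set (SignVec E)) : Prop :=
  ∀ T ∈ Topes L, ∀ e, T e ≠ 0

/-- The separator of two (co)vectors. -/
def sep {E : Type*} (P Q : SignVec E) : Set E := {e | P e = -Q e ∧ P e ≠ 0}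

/-- The star of a covector: all topes above it. -/
def star {E : Type*} (L : Set (SignVec E)) (X : SignVec E) : Set (SignVec E) :=
  {T ∈ Topes L | SignVec.le X T}

/-- The closed interval `[Q,P]_R` in the tope poset with base tope `R`. -/
def intervalR {E : Type*} (L : Set (SignVec E)) (R Q P : SignVec E) : Set (SignVec E) :=
  {T ∈ Topes L | sep R Q ⊆ sep R T ∧ sep R T ⊆ sep R P}

/-- The open interval `(0̂, P)_{R,e}` in `T_{R,e}`. -/
def openInt {E : Type*} (L : Set (SignVec E)) (R : SignVec E) (e : E) (P : SignVec E) :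
    Set (SignVec E) :=
  {Q ∈ Topes L | Q e = -R e ∧ sep R Q ⊂ sep R P}

/-- The subposet `(0̂,P)^△_{R,e}` of `(0̂,P)_{R,e}`. -/
def openIntTri {E : Type*} (L : Set (SignVec E)) (R : SignVec E) (e : E) (P : SignVec E) :
    Set (SignVec E) :=
  {Q ∈ openInt L R e P | ∃ X ∈ L, intervalR L R Q P = star L X}

/-- Ordering a set of topes by `P ⪯_R Q ↔ Sep(R,P) ⊆ Sep(R,Q)`. -/
def sepPreorder {E : Type*} (R : SignVec E) (S : Set (SignVec E)) : Preorder S where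
  le P Q := sep R P.1 ⊆ sep R Q.1
  lt P Q := sep R P.1 ⊆ sep R Q.1 ∧ ¬ sep R Q.1 ⊆ sep R P.1
  le_refl _ := subset_rfl
  le_trans _ _ _ h₁ h₂ := fun _ hx => h₂ (h₁ hx)
  lt_iff_le_not_ge _ _ := Iff.rfl

/-- Ordering a set of covectors by the componentwise order on sign vectors. -/
def covPreorder {E : Type*} (S : Set (SignVec E)) : Preorder S where
  le X Y := SignVec.le X.1 Y.1
  lt X Y := SignVec.le X.1 Y.1 ∧ ¬ SignVec.le Y.1 X.1
  le_refl _ := fun _ => Or.inr rfl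
  le_trans X Y Z h₁ h₂ := fun e => by
    rcases h₁ e with h | h
    · exact Or.inl h
    · rcases h₂ e with h' | h'
      · exact Or.inl (h.trans h')
      · exact Or.inr (h.trans h')
  lt_iff_le_not_ge _ _ := Iff.rfl

open CategoryTheory in
/-- The geometric realization of the order complex of a poset, realized as the topological
realization of the nerve of the poset viewed as a category. -/
noncomputable def posetRealization (α : Type) [Preorder α] : TopCat :=
  SSet.toTop.obj (nerve α)

/-- The monomial `∏_{e ∈ Sep(P,Q)} U_e`, the `(P,Q)` entry of the Varchenko matrix. -/
noncomputable def vchEntry {E : Type*} [Fintype E] (K : Type*) [Field K] (P Q : SignVec E) :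
    MvPolynomial E K :=
  ∏ e ∈ Finset.univ.filter fun e => P e = -Q e ∧ P e ≠ 0, MvPolynomial.X e

/-- The Varchenko matrix of `L`, with rows and columns indexed by the topes of `L`. -/
noncomputable def varchenko {E : Type*} [Fintype E] (K : Type*) [Field K]
    (L : Set (SignVec E)) : Matrix ↥(Topes L) ↥(Topes L) (MvPolynomial E K) :=
  Matrix.of fun P Q => vchEntry K P.1 Q.1

/-- `a(F) = ∏_{e : F_e = 0} U_e`. -/
noncomputable def aF {E : Type*} [Fintype E] (K : Type*) [Field K] (F : SignVec E) :
    MvPolynomial E K :=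
  ∏ e ∈ Finset.univ.filter fun e => F e = 0, MvPolynomial.X e

/-- `T^{F,e}`: the topes `P` such that `F` is the greatest covector `G ∈ L` with
`G ≤ P` and `G e = 0`. -/
def TFe {E : Type*} (L : Set (SignVec E)) (F : SignVec E) (e : E) : Set (SignVec E) :=
  {P ∈ Topes L | F ∈ L ∧ SignVec.le F P ∧ F e = 0 ∧
    ∀ G ∈ L, SignVec.le G P → G e = 0 → SignVec.le G F}

/-- The poset `W_{R,e}(P)`. -/
def Wset {E : Type*} (L : Set (SignVec E)) (R : SignVec E) (e : E) (P : SignVec E) :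
    Set (SignVec E) :=
  {F ∈ L | F ≠ 0 ∧ SignVec.le F P ∧ F ≠ P ∧ F e = -R e ∧
    (∀ f, f ∉ sep P R → F f = P f) ∧ ∀ f ∈ sep P R, f ≠ e → F f = 0 ∨ F f = P f}

open scoped Classical in
/-- `μ` is, for every base tope `B` of `L`, the Möbius function `μ(0̂, ·)` of the poset
`T_{B,e}` (computed in its incidence algebra over `ℤ`): it satisfies the defining
recursion `∑_{0̂ ≤ z ≤ Q} μ(0̂,z) = 0` for every `Q > 0̂`, where `μ(0̂,0̂) = 1`. -/
def IsMoebius {E : Type*} [Fintype E] (L : Set (SignVec E)) (e : E)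
    (μ : SignVec E → SignVec E → ℤ) : Prop :=
  ∀ B ∈ Topes L, ∀ Q ∈ Topes L, Q e = -B e →
    1 + ∑ Q' ∈ Finset.univ.filter
      (fun Q' : SignVec E => Q' ∈ Topes L ∧ Q' e = -B e ∧ sep B Q' ⊆ sep B Q), μ Q' B = 0

/-- `L` is graded of rank `r`: every maximal chain of covectors (necessarily running from
the zero covector to a tope) has length `r`, i.e. `r+1` elements. -/
def GradedOfRank {α : Type*} (L : Set (SignVec α)) (r : ℕ) : Prop :=
  ∀ c : Finset (SignVec α), ↑c ⊆ L → IsChain SignVec.le (c : Set (SignVec α)) →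
    (0 : SignVec α) ∈ c → (∃ T ∈ c, T ∈ Topes L) →
    (∀ d : Finset (SignVec α), ↑d ⊆ L → IsChain SignVec.le (d : Set (SignVec α)) →
      c ⊆ d → c = d) →
    c.card = r + 1

/-- The restriction `L|_A` of `L` to a subset `A` of the ground set. -/
def restrictOM {E : Type*} (L : Set (SignVec E)) (A : Set E) : Set (SignVec ↥A) :=
  (fun X (a : ↥A) => X a.1) '' L

/-- `e` is the maximal element of `Sep(P,Q)`. -/
def maxSep {E : Type*} [LinearOrder E] (e : E) (P Q : SignVec E) : Prop :=
  e ∈ sep P Q ∧ ∀ f ∈ sep P Q, f ≤ e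

open scoped Classical in
/-- The `(Q,R)` entry of the matrix `𝓜^e`. -/
noncomputable def mEntry {E : Type*} [Fintype E] [LinearOrder E] (K : Type*) [Field K]
    (μ : SignVec E → SignVec E → ℤ) (e : E) (Q R : SignVec E) : MvPolynomial E K :=
  if Q = R then 1
  else if Q e = -1 ∧ R e = 1 ∧ maxSep e Q R then
    ((-μ Q R : ℤ) : MvPolynomial E K) * vchEntry K Q R
  else if Q e = 1 ∧ R e = -1 ∧ maxSep e Q R then
    ((-μ (-Q) (-R) : ℤ) : MvPolynomial E K) * vchEntry K Q R
  else 0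

/-!
Writing `C₀ = F ∘ R`, one has `Sep(R, C₀) = Sep(F, R)`. A tope `T` lies in `[C₀, P]_R` exactly
when it agrees with `F` on the support of `F`: where `F` opposes `R` this is the lower bound,
and where `F` agrees with `R` (hence `P` does too) it is the upper bound. For maximality, if
`[C, P]_R = star(X)` then the tope `X ∘ R ∈ star(X)` gives
`Sep(R, C) ⊆ Sep(X, R) ⊆ Sep(F, R) = Sep(R, C₀)` whenever `X ≤ F`.
-/

lemma SignType.eq_or_eq_neg {a b : SignType} (ha : a ≠ 0) (hb : b ≠ 0) : a = b ∨ a = -b := by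
  decide +revert

namespace SignVec

variable {E : Type*}

lemma le.eq_of_ne_zero {X Y : SignVec E} (h : le X Y) {f : E} (hf : X f ≠ 0) : X f = Y f :=
  (h f).resolve_left hf

lemma comp_apply_of_ne_zero {X : SignVec E} (Y : SignVec E) {f : E} (hf : X f ≠ 0) :
    comp X Y f = X f :=
  if_neg hf

lemma le_comp (X Y : SignVec E) : le X (comp X Y) := fun f => by
  by_cases hf : X f = 0
  · exact Or.inl hf
  · exact Or.inr (comp_apply_of_ne_zero Y hf).symm

lemma comp_ne_zero (X : SignVec E) {Y : SignVec E} (hY : ∀ f, Y f ≠ 0) (f : E) :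
    comp X Y f ≠ 0 := by
  unfold comp
  split_ifs with hf
  exacts [hY f, hf]

end SignVec

open SignVec

section Separator

variable {E : Type*}

lemma sep_comm (P Q : SignVec E) : sep P Q = sep Q P := by
  ext f
  change (_ ∧ _) ↔ (_ ∧ _)
  generalize P f = a, Q f = b
  decide +revert

lemma sep_comp_left (X Y : SignVec E) : sep (comp X Y) Y = sep X Y := by
  ext f
  by_cases hf : X f = 0
  · simp [sep, comp, hf, SignType.self_eq_neg_iff]
  · simp [sep, comp_apply_of_ne_zero Y hf, hf]

lemma sep_mono_left {X Y : SignVec E} (h : le X Y) (R : SignVec E) : sep X R ⊆ sep Y R :=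
  fun f ⟨hf, hf0⟩ => by rw [h.eq_of_ne_zero hf0] at hf hf0; exact ⟨hf, hf0⟩

lemma notMem_sep_iff {R T : SignVec E} {f : E} (hR : R f ≠ 0) (hT : T f ≠ 0) :
    f ∉ sep R T ↔ R f = T f := by
  rcases SignType.eq_or_eq_neg hR hT with h | h <;> simp [sep, h, hT]

end Separator

section Topes

variable {E : Type*} {L : Set (SignVec E)}

lemma mem_topes_of_forall_ne_zero {X : SignVec E} (hX : X ∈ L) (h : ∀ f, X f ≠ 0) :
    X ∈ Topes L :=
  ⟨hX, fun _ _ hle => funext fun f => ((hle f).resolve_left (h f)).symm⟩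

lemma IsOrientedMatroid.comp_mem_star (hOM : IsOrientedMatroid L) {X R : SignVec E}
    (hX : X ∈ L) (hR : R ∈ L) (hR0 : ∀ f, R f ≠ 0) : comp X R ∈ star L X :=
  ⟨mem_topes_of_forall_ne_zero (hOM.comp_mem X hX R hR) (comp_ne_zero X hR0), le_comp X R⟩

lemma IsOrientedMatroid.sep_subset_of_intervalR_eq_star (hOM : IsOrientedMatroid L)
    {R C P X : SignVec E} (hR : R ∈ L) (hR0 : ∀ f, R f ≠ 0) (hX : X ∈ L)
    (h : intervalR L R C P = star L X) : sep R C ⊆ sep X R := by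
  have hXR : comp X R ∈ intervalR L R C P := h ▸ hOM.comp_mem_star hX hR hR0
  simpa only [sep_comm R, sep_comp_left] using hXR.2.1

lemma intervalR_comp_subset_star (hloop : Loopless L) {R P F : SignVec E}
    (hR0 : ∀ f, R f ≠ 0) (hP0 : ∀ f, P f ≠ 0) (hFP : le F P) :
    intervalR L R (comp F R) P ⊆ star L F := by
  rintro T ⟨hT, hlow, hup⟩
  refine ⟨hT, fun f => or_iff_not_imp_left.2 fun hF0 => ?_⟩
  have hT0 := hloop T hT f
  rw [sep_comm, sep_comp_left] at hlow
  rcases SignType.eq_or_eq_neg hF0 (hR0 f) with hFR | hFR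
  · have hPR : R f = P f := hFR ▸ hFP.eq_of_ne_zero hF0
    have hTR : R f = T f := (notMem_sep_iff (hR0 f) hT0).1
      fun hf => (notMem_sep_iff (hR0 f) (hP0 f)).2 hPR (hup hf)
    rw [hFR, hTR]
  · rw [hFR, (hlow ⟨hFR, hF0⟩).1, neg_neg]

lemma star_subset_intervalR_comp {R P F : SignVec E} (hP0 : ∀ f, P f ≠ 0)
    (hagree : ∀ f, f ∉ sep P R → F f = P f) :
    star L F ⊆ intervalR L R (comp F R) P := by
  rintro T ⟨hT, hFT⟩
  refine ⟨hT, ?_, fun f hf => by_contra fun hfP => ?_⟩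
  · rw [sep_comm R, sep_comp_left, sep_comm R]
    exact sep_mono_left hFT R
  · have hFf : F f = P f := hagree f (by rwa [sep_comm])
    have hTf : T f = P f := by rw [← hFf, hFT.eq_of_ne_zero (hFf ▸ hP0 f)]
    exact hfP ⟨by rw [hf.1, hTf], hf.2⟩

lemma sep_ssubset_of_le_of_ne {R P F : SignVec E} (hFP : le F P) (hne : F ≠ P)
    (hagree : ∀ f, f ∉ sep P R → F f = P f) : sep F R ⊂ sep P R := by
  obtain ⟨f, hf⟩ := Function.ne_iff.1 hne
  have hF0 : F f = 0 := (hFP f).resolve_right hf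
  have hfP : f ∈ sep P R := by_contra fun hfP => hf (hagree f hfP)
  exact (sep_mono_left hFP R).ssubset_of_not_subset fun hsub => (hsub hfP).2 hF0

end Topes

theorem comp_base_greatest_in_fiber_general {E : Type*} (L : Set (SignVec E))
    (hOM : IsOrientedMatroid L) (hloop : Loopless L)
    (R P F : SignVec E) (e : E) (hR : R ∈ Topes L) (hP : P ∈ Topes L)
    (hF : F ∈ Wset L R e P) :
    (SignVec.comp F R ∈ openIntTri L R e P ∧
      intervalR L R (SignVec.comp F R) P = star L F) ∧
    ∀ C ∈ openIntTri L R e P,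
      (∃ X ∈ L, SignVec.le X F ∧ intervalR L R C P = star L X) →
        sep R C ⊆ sep R (SignVec.comp F R) := by
  obtain ⟨hFL, -, hFP, hFneP, hFe, hagree, -⟩ := hF
  have hR0 := hloop R hR
  have hP0 := hloop P hP
  have hsepC₀ : sep R (comp F R) = sep F R := by rw [sep_comm, sep_comp_left]
  have hstar : intervalR L R (comp F R) P = star L F :=
    (intervalR_comp_subset_star hloop hR0 hP0 hFP).antisymm (star_subset_intervalR_comp hP0 hagree)
  have hFe0 : F e ≠ 0 := by rw [hFe, Ne, SignType.neg_eq_zero_iff]; exact hR0 e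
  have hC₀e : comp F R e = -R e := (comp_apply_of_ne_zero R hFe0).trans hFe
  have hC₀ : comp F R ∈ openInt L R e P := by
    refine ⟨(hOM.comp_mem_star hFL hR.1 hR0).1, hC₀e, ?_⟩
    rw [hsepC₀, sep_comm R]
    exact sep_ssubset_of_le_of_ne hFP hFneP hagree
  refine ⟨⟨⟨hC₀, F, hFL, hstar⟩, hstar⟩, ?_⟩
  rintro C - ⟨X, hXL, hXF, hCX⟩
  rw [hsepC₀]
  exact (hOM.sep_subset_of_intervalR_eq_star hR.1 hR0 hXL hCX).trans (sep_mono_left hXF R)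

/-- Lemma 3.1 (iii): `F ∘ R` is the unique maximal element of the fiber
`α_P⁻¹(W_{R,e}(P)_{≤ F})`. -/
theorem comp_base_greatest_in_fiber {E : Type*} [Fintype E] (L : Set (SignVec E))
    (hOM : IsOrientedMatroid L) (hloop : Loopless L)
    (R P F : SignVec E) (e : E) (hR : R ∈ Topes L) (hP : P ∈ Topes L) (hPe : P e = -R e)
    (hF : F ∈ Wset L R e P) :
    (SignVec.comp F R ∈ openIntTri L R e P ∧
      intervalR L R (SignVec.comp F R) P = star L F) ∧
    ∀ C ∈ openIntTri L R e P,
      (∃ X ∈ L, SignVec.le X F ∧ intervalR L R C P = star L X) →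
        sep R C ⊆ sep R (SignVec.comp F R) :=
  comp_base_greatest_in_fiber_general L hOM hloop R P F e hR hP hF
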